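/- For every nonnegative integer n, CP_n^{(k)}(x;λ,μ) = Σ_{j=0}^{n} (-1)^j [Σ_{m=0}^{n} C(n,m) s(n-m,j) CP_m^{(k)}(0;λ,μ)] x^j, where s(·,·) denotes the (signed) Stirling numbers of the first kind. -/

import Mathlib

open PowerSeries Finset

noncomputable section

/-- The formal power series log(1+t). -/
def logS : PowerSeries ℝ :=
  PowerSeries.mk fun n => if n = 0 then 0 else (-1) ^ (n + 1) / n

/-- Composition of formal power series (valid when `g` has zero constant term). -/
def compS (f g : PowerSeries ℝ) : PowerSeries ℝ :=
  PowerSeries.mk fun n =>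
    ∑ m ∈ Finset.range (n + 1), (PowerSeries.coeff m f) * PowerSeries.coeff n (g ^ m)

/-- The formal power series (1+t)^x = Σ (x)_n t^n / n!. -/
def onePow (x : ℝ) : PowerSeries ℝ :=
  PowerSeries.mk fun n => (descPochhammer ℝ n).eval x / n.factorial

/-- The polylogarithm factorial function Lif_k(t) = Σ t^n/(n!(n+1)^k). -/
def Lif (k : ℤ) : PowerSeries ℝ :=
  PowerSeries.mk fun n => 1 / (n.factorial * ((n : ℝ) + 1) ^ k)

/-- The Peters factor (1+(1+t)^λ)^(-μ) = 2^(-μ) exp(-μ log(1 + ((1+t)^λ - 1)/2)). -/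
def peters (lam mu : ℝ) : PowerSeries ℝ :=
  PowerSeries.C (R := ℝ) ((2 : ℝ) ^ (-mu)) *
    compS (PowerSeries.exp ℝ)
      (PowerSeries.C (R := ℝ) (-mu) * compS logS (PowerSeries.C (R := ℝ) (1 / 2) * (onePow lam - 1)))

/-- The Peters polynomials S_n(x;λ,μ). -/
def petersPoly (lam mu x : ℝ) (n : ℕ) : ℝ :=
  n.factorial * PowerSeries.coeff n (peters lam mu * onePow x)

/-- Poly-Cauchy polynomials of the first kind C_n^{(k)}(x). -/
def pC (k : ℤ) (x : ℝ) (n : ℕ) : ℝ :=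
  n.factorial * PowerSeries.coeff n (compS (Lif k) logS * onePow (-x))

/-- Poly-Cauchy polynomials of the second kind Ĉ_n^{(k)}(x). -/
def pChat (k : ℤ) (x : ℝ) (n : ℕ) : ℝ :=
  n.factorial * PowerSeries.coeff n (compS (Lif k) (-logS) * onePow x)

/-- The poly-Cauchy of the first kind and Peters mixed-type polynomials CP_n^{(k)}(x;λ,μ). -/
def CP (k : ℤ) (lam mu x : ℝ) (n : ℕ) : ℝ :=
  n.factorial * PowerSeries.coeff n (peters lam mu * compS (Lif k) logS * onePow (-x))

/-- The poly-Cauchy of the second kind and Peters mixed-type polynomials ĈP_n^{(k)}(x;λ,μ). -/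
def CPhat (k : ℤ) (lam mu x : ℝ) (n : ℕ) : ℝ :=
  n.factorial * PowerSeries.coeff n (peters lam mu * compS (Lif k) (-logS) * onePow x)

/-- Signed Stirling numbers of the first kind: (x)_n = Σ_l s(n,l) x^l. -/
def stirS (n l : ℕ) : ℝ := (descPochhammer ℝ n).coeff l

/-! Only the factor `(1+t)^(-x)` depends on `x`, so `CP_n(x)` is the binomial convolution of
`CP_m(0)` with the falling factorials `(-x)_(n-m)`; expanding these in Stirling numbers gives the
claim. -/

lemma onePow_zero : onePow 0 = 1 := by
  ext p
  rcases eq_or_ne p 0 with rfl | hp <;> simp [onePow, descPochhammer_eval_zero, *]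

lemma factorial_mul_coeff_mul_onePow (A : PowerSeries ℝ) (y : ℝ) (n : ℕ) :
    n.factorial * coeff n (A * onePow y) =
      ∑ m ∈ range (n + 1),
        (n.choose m : ℝ) * (m.factorial * coeff m A) * (descPochhammer ℝ (n - m)).eval y := by
  rw [coeff_mul, Nat.sum_antidiagonal_eq_sum_range_succ_mk, mul_sum]
  refine sum_congr rfl fun m hm => ?_
  have hfac : (n.factorial : ℝ) = n.choose m * m.factorial * (n - m).factorial := by
    rw [← Nat.choose_mul_factorial_mul_factorial (mem_range_succ_iff.mp hm)]
    push_cast; ring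
  have hpos : ((n - m).factorial : ℝ) ≠ 0 := by positivity
  simp only [onePow, coeff_mk, hfac]
  field_simp

lemma descPochhammer_eval_eq_sum_stirS {p n : ℕ} (hp : p ≤ n) (y : ℝ) :
    (descPochhammer ℝ p).eval y = ∑ j ∈ range (n + 1), stirS p j * y ^ j :=
  Polynomial.eval_eq_sum_range' (by rw [descPochhammer_natDegree]; omega) y

lemma CP_eq_sum_choose_mul_descPochhammer (k : ℤ) (lam mu x : ℝ) (n : ℕ) :
    CP k lam mu x n =
      ∑ m ∈ range (n + 1),
        (n.choose m : ℝ) * CP k lam mu 0 m * (descPochhammer ℝ (n - m)).eval (-x) := by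
  simp only [CP, neg_zero, onePow_zero, mul_one]
  exact factorial_mul_coeff_mul_onePow _ _ n

theorem CP_eq_sum_stirling (k : ℤ) (lam mu x : ℝ) (n : ℕ) :
    CP k lam mu x n =
      ∑ j ∈ Finset.range (n + 1),
        (-1 : ℝ) ^ j *
          (∑ m ∈ Finset.range (n + 1),
            (n.choose m : ℝ) * stirS (n - m) j * CP k lam mu 0 m) * x ^ j := by
  rw [CP_eq_sum_choose_mul_descPochhammer]
  simp only [mul_sum, sum_mul]
  rw [sum_comm]
  refine sum_congr rfl fun m _ => ?_
  rw [descPochhammer_eval_eq_sum_stirS (n.sub_le m), mul_sum]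
  refine sum_congr rfl fun j _ => ?_
  rw [neg_eq_neg_one_mul, mul_pow]
  ring
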